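/- arXiv:2404.16204 — 2 statements merged into one kernel-verified Lean document; each statement's English description precedes it below -/
import Mathlib

section
/- (Role delegation type II, case 1, graph level.) Let P1 and P2 be disjoint sets of vertices with c1 ∈ P1 and c2 ∈ P2, let S = S(P1, P2, c1, c2) be the binary star graph, let w ∈ P2 \ {c2}, and let v ∈ P1 \ {c1}. Let G' = S − (P2 \ {c2, w}) be obtained by deleting all vertices of P2 other than c2 and w, and let S'' = τ_{c1}(G') − c1. Then τ_v(τ_{c2}(τ_v(S'')) − c2) is the star graph on (P1 \ {c1}) ∪ {w} with center v. -/
open SimpleGraph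

universe u

/-- Local complementation of `G` at vertex `i`: adjacency is toggled exactly among
pairs of neighbors of `i`. -/
def localComp {V : Type u} (G : SimpleGraph V) (i : V) : SimpleGraph V where
  Adj a b := a ≠ b ∧
    ((G.Adj i a ∧ G.Adj i b) ∧ ¬ G.Adj a b ∨ ¬(G.Adj i a ∧ G.Adj i b) ∧ G.Adj a b)
  symm := by
    constructor
    rintro a b ⟨hne, h⟩
    refine ⟨hne.symm, ?_⟩
    rcases h with ⟨⟨ha, hb⟩, hab⟩ | ⟨h1, h2⟩
    · exact Or.inl ⟨⟨hb, ha⟩, fun h => hab h.symm⟩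
    · exact Or.inr ⟨fun h => h1 ⟨h.2, h.1⟩, h2.symm⟩
  loopless := ⟨fun a h => h.1 rfl⟩

/-- Vertex deletion `G − i`: remove every edge incident to `i` (the vertex stays,
isolated). -/
def delVert {V : Type u} (G : SimpleGraph V) (i : V) : SimpleGraph V where
  Adj a b := G.Adj a b ∧ a ≠ i ∧ b ≠ i
  symm := ⟨fun _ _ ⟨h, ha, hb⟩ => ⟨h.symm, hb, ha⟩⟩
  loopless := ⟨fun a h => G.irrefl h.1⟩

/-- Deletion of a set `Z` of vertices: remove every edge incident to a vertex of `Z`. -/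
def delSet {V : Type u} (G : SimpleGraph V) (Z : Set V) : SimpleGraph V where
  Adj a b := G.Adj a b ∧ a ∉ Z ∧ b ∉ Z
  symm := ⟨fun _ _ ⟨h, ha, hb⟩ => ⟨h.symm, hb, ha⟩⟩
  loopless := ⟨fun a h => G.irrefl h.1⟩

/-- Star graph on the set `W` with center `c`: edges are exactly the pairs `{c, u}`
for `u ∈ W \ {c}`. -/
def starGraph {V : Type u} (W : Set V) (c : V) : SimpleGraph V :=
  SimpleGraph.fromRel (fun a b => a = c ∧ b ∈ W \ {c})

/-- Complete graph on the set `A`: edges are exactly all pairs of distinct elements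
of `A`. -/
def completeOn {V : Type u} (A : Set V) : SimpleGraph V :=
  SimpleGraph.fromRel (fun a b => a ∈ A ∧ b ∈ A)

/-- Complete bipartite graph on parts `A` and `B`: edges are exactly the pairs
`{a, b}` with `a ∈ A` and `b ∈ B`. -/
def completeBipartiteOn {V : Type u} (A B : Set V) : SimpleGraph V :=
  SimpleGraph.fromRel (fun a b => a ∈ A ∧ b ∈ B)

/-- Binary star graph `S(P1, P2, c1, c2)`: edges are exactly the pairs `{c1, u}`
with `u ∈ P2` together with the pairs `{u, c2}` with `u ∈ P1`. -/
def binaryStar {V : Type u} (P1 P2 : Set V) (c1 c2 : V) : SimpleGraph V :=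
  SimpleGraph.fromRel (fun a b => (a = c1 ∧ b ∈ P2) ∨ (a ∈ P1 ∧ b = c2))

/-- The graph with the single edge `{c1, c2}`. -/
def singleEdge {V : Type u} (c1 c2 : V) : SimpleGraph V :=
  SimpleGraph.fromRel (fun a b => a = c1 ∧ b = c2)


/-!
Deleting `P2 \ {c2, w}` leaves a binary star in which `c1` is adjacent to `c2` and `w` only,
so `τ_{c1}` adds the single edge `w c2`, and deleting `c1` leaves the star with centre `c2` on
`W = (P1 \ {c1}) ∪ {w}`. The leaf `v` has a single neighbour, so `τ_v` changes nothing;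
`τ_{c2}` followed by deleting `c2` turns the star into the complete graph on `W`; finally `τ_v`
at `v ∈ W` removes every edge of that complete graph not incident to `v`.
-/

section

variable {V : Type u}

@[simp] lemma localComp_adj (G : SimpleGraph V) (i a b : V) :
    (localComp G i).Adj a b ↔ a ≠ b ∧
      ((G.Adj i a ∧ G.Adj i b) ∧ ¬ G.Adj a b ∨ ¬(G.Adj i a ∧ G.Adj i b) ∧ G.Adj a b) :=
  Iff.rfl

@[simp] lemma delVert_adj (G : SimpleGraph V) (i a b : V) :
    (delVert G i).Adj a b ↔ G.Adj a b ∧ a ≠ i ∧ b ≠ i :=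
  Iff.rfl

@[simp] lemma delSet_adj (G : SimpleGraph V) (Z : Set V) (a b : V) :
    (delSet G Z).Adj a b ↔ G.Adj a b ∧ a ∉ Z ∧ b ∉ Z :=
  Iff.rfl

@[simp] lemma starGraph_adj_iff (W : Set V) (c a b : V) :
    (starGraph W c).Adj a b ↔ a ≠ b ∧ (a = c ∧ b ∈ W ∨ b = c ∧ a ∈ W) := by
  simp only [_root_.starGraph, fromRel_adj]
  grind

@[simp] lemma completeOn_adj (A : Set V) (a b : V) :
    (completeOn A).Adj a b ↔ a ≠ b ∧ a ∈ A ∧ b ∈ A := by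
  simp only [completeOn, fromRel_adj]
  tauto

@[simp] lemma binaryStar_adj (P1 P2 : Set V) (c1 c2 a b : V) :
    (binaryStar P1 P2 c1 c2).Adj a b ↔ a ≠ b ∧
      (a = c1 ∧ b ∈ P2 ∨ a ∈ P1 ∧ b = c2 ∨ b = c1 ∧ a ∈ P2 ∨ b ∈ P1 ∧ a = c2) := by
  simp only [binaryStar, fromRel_adj, or_assoc]

lemma localComp_eq_self_of_subsingleton {G : SimpleGraph V} {i : V}
    (h : ∀ a b, G.Adj i a → G.Adj i b → a = b) : localComp G i = G := by
  ext a b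
  simp only [localComp_adj]
  constructor
  · rintro ⟨hab, ⟨⟨ha, hb⟩, -⟩ | ⟨-, hadj⟩⟩
    · exact absurd (h a b ha hb) hab
    · exact hadj
  · intro hadj
    exact ⟨hadj.ne, Or.inr ⟨fun hi => hadj.ne (h a b hi.1 hi.2), hadj⟩⟩

lemma localComp_starGraph_of_ne {W : Set V} {c v : V} (hv : v ≠ c) :
    localComp (starGraph W c) v = starGraph W c := by
  apply localComp_eq_self_of_subsingleton
  intro a b ha hb
  simp only [starGraph_adj_iff] at ha hb
  grind

lemma delVert_localComp_starGraph (W : Set V) (c : V) :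
    delVert (localComp (starGraph W c) c) c = completeOn (W \ {c}) := by
  ext a b
  simp only [delVert_adj, localComp_adj, starGraph_adj_iff, completeOn_adj, Set.mem_sdiff,
    Set.mem_singleton_iff]
  grind

lemma localComp_completeOn {A : Set V} {v : V} (hv : v ∈ A) :
    localComp (completeOn A) v = starGraph A v := by
  ext a b
  simp only [localComp_adj, completeOn_adj, starGraph_adj_iff]
  grind

lemma delSet_binaryStar {P1 P2 : Set V} (hdisj : Disjoint P1 P2) {c1 c2 w : V}
    (hc1 : c1 ∈ P1) (hw : w ∈ P2) :
    delSet (binaryStar P1 P2 c1 c2) (P2 \ {c2, w}) = binaryStar P1 {c2, w} c1 c2 := by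
  have := Set.disjoint_left.mp hdisj
  ext a b
  simp only [delSet_adj, binaryStar_adj, Set.mem_sdiff, Set.mem_insert_iff,
    Set.mem_singleton_iff]
  grind

lemma delVert_localComp_binaryStar_pair {P1 : Set V} {c1 c2 w : V} (hc1 : c1 ∈ P1)
    (hc12 : c1 ≠ c2) (hw : w ∉ P1) :
    delVert (localComp (binaryStar P1 {c2, w} c1 c2) c1) c1 =
      starGraph ((P1 \ {c1}) ∪ {w}) c2 := by
  ext a b
  simp only [delVert_adj, localComp_adj, binaryStar_adj, starGraph_adj_iff, Set.mem_union,
    Set.mem_sdiff, Set.mem_insert_iff, Set.mem_singleton_iff]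
  grind

end

/-- Role delegation type II, case 1, graph level:
with `G' = S − (P2 \ {c2, w})` and `S'' = τ_{c1}(G') − c1`,
`τ_v(τ_{c2}(τ_v(S'')) − c2)` is the star graph on `(P1 \ {c1}) ∪ {w}` with center `v`. -/
theorem stmt_11 {V : Type u} (P1 P2 : Set V) (hdisj : Disjoint P1 P2)
    (c1 c2 : V) (hc1 : c1 ∈ P1) (hc2 : c2 ∈ P2)
    (w : V) (hw : w ∈ P2 \ {c2}) (v : V) (hv : v ∈ P1 \ {c1}) :
    localComp (delVert (localComp (localComp
        (delVert (localComp
          (delSet (binaryStar P1 P2 c1 c2) (P2 \ {c2, w})) c1) c1) v) c2) c2) v =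
      starGraph ((P1 \ {c1}) ∪ {w}) v := by
  obtain ⟨hwP2, hwc2⟩ := hw
  have hc2P1 : c2 ∉ P1 := Set.disjoint_right.mp hdisj hc2
  have hc2W : c2 ∉ (P1 \ {c1}) ∪ {w} := by
    rintro (⟨h, -⟩ | h)
    exacts [hc2P1 h, hwc2 h.symm]
  rw [delSet_binaryStar hdisj hc1 hwP2,
    delVert_localComp_binaryStar_pair hc1 (ne_of_mem_of_not_mem hc1 hc2P1)
      (Set.disjoint_right.mp hdisj hwP2),
    localComp_starGraph_of_ne (ne_of_mem_of_not_mem hv.1 hc2P1),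
    delVert_localComp_starGraph, Set.sdiff_singleton_eq_self hc2W,
    localComp_completeOn (Set.mem_union_left _ hv)]
end

section
/- (Extranet, graph level.) Let P1 and P2 be disjoint sets of vertices with c1 ∈ P1 and c2 ∈ P2, and let S = S(P1, P2, c1, c2) be the binary star graph. Then (τ_{c2}(τ_{c1}(τ_{c2}(S)) − c1)) − c2 is the complete bipartite graph on (P1 \ {c1}, P2 \ {c2}). -/
/-!
Local complementation at `i` is the symmetric difference with the complete graph on the
neighbourhood of `i`, so each step is governed by a single neighbourhood. In `S` the
neighbourhood of `c2` is `P1`, which adds the clique on `P1`. The neighbourhood of `c1` is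
then `(P1 \ {c1}) ∪ P2`: toggling it cancels the clique on `P1 \ {c1}` and the edges from it
to `c2`, and after deleting `c1` leaves the clique on `P2` plus the complete bipartite graph
between `P1 \ {c1}` and `P2 \ {c2}`. Finally the neighbourhood of `c2` is `P2 \ {c2}`,
whose clique cancels the clique on `P2` except for the edges at `c2`, which the last
deletion removes.
-/

open SimpleGraph

universe u

variable {V : Type u}

@[simp] lemma completeBipartiteOn_adj (A B : Set V) (a b : V) :
    (completeBipartiteOn A B).Adj a b ↔ a ≠ b ∧ (a ∈ A ∧ b ∈ B ∨ b ∈ A ∧ a ∈ B) := by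
  simp [completeBipartiteOn]

lemma localComp_eq_symmDiff (G : SimpleGraph V) (i : V) :
    localComp G i = symmDiff G (completeOn (G.neighborSet i)) := by
  ext a b
  obtain rfl | hab := eq_or_ne a b
  · simp
  simp only [localComp, symmDiff_def, sup_adj, sdiff_adj, completeOn_adj, mem_neighborSet]
  tauto

section
variable {P1 P2 : Set V} {c1 c2 : V}

lemma neighborSet_binaryStar_right (hdisj : Disjoint P1 P2) (hc1 : c1 ∈ P1) (hc2 : c2 ∈ P2) :
    (binaryStar P1 P2 c1 c2).neighborSet c2 = P1 := by
  have hP : ∀ u ∈ P1, u ∉ P2 := fun _ => (hdisj.notMem_of_mem_left ·)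
  ext u
  simp only [mem_neighborSet, binaryStar_adj]
  grind

lemma localComp_binaryStar_right (hdisj : Disjoint P1 P2) (hc1 : c1 ∈ P1) (hc2 : c2 ∈ P2) :
    localComp (binaryStar P1 P2 c1 c2) c2 = binaryStar P1 P2 c1 c2 ⊔ completeOn P1 := by
  have hP : ∀ u ∈ P1, u ∉ P2 := fun _ => (hdisj.notMem_of_mem_left ·)
  have hdisj' : Disjoint (binaryStar P1 P2 c1 c2) (completeOn P1) := by
    rw [disjoint_iff_inf_le]
    intro a b
    simp only [inf_adj, binaryStar_adj, completeOn_adj, bot_adj]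
    grind
  rw [localComp_eq_symmDiff, neighborSet_binaryStar_right hdisj hc1 hc2, hdisj'.symmDiff_eq_sup]

lemma neighborSet_binaryStar_sup_completeOn_left (hdisj : Disjoint P1 P2) (hc1 : c1 ∈ P1)
    (hc2 : c2 ∈ P2) :
    (binaryStar P1 P2 c1 c2 ⊔ completeOn P1).neighborSet c1 = P1 \ {c1} ∪ P2 := by
  have hP : ∀ u ∈ P1, u ∉ P2 := fun _ => (hdisj.notMem_of_mem_left ·)
  ext u
  simp only [mem_neighborSet, sup_adj, binaryStar_adj, completeOn_adj, Set.mem_union,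
    Set.mem_sdiff, Set.mem_singleton_iff]
  grind

lemma delVert_localComp_binaryStar_sup_completeOn (hdisj : Disjoint P1 P2) (hc1 : c1 ∈ P1)
    (hc2 : c2 ∈ P2) :
    delVert (localComp (binaryStar P1 P2 c1 c2 ⊔ completeOn P1) c1) c1 =
      completeOn P2 ⊔ completeBipartiteOn (P1 \ {c1}) (P2 \ {c2}) := by
  have hP : ∀ u ∈ P1, u ∉ P2 := fun _ => (hdisj.notMem_of_mem_left ·)
  rw [localComp_eq_symmDiff, neighborSet_binaryStar_sup_completeOn_left hdisj hc1 hc2]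
  ext a b
  simp only [delVert_adj, symmDiff_def, sup_adj, sdiff_adj, binaryStar_adj, completeOn_adj,
    completeBipartiteOn_adj, Set.mem_union, Set.mem_sdiff, Set.mem_singleton_iff]
  grind

end

section
variable {A B : Set V} {c : V}

lemma neighborSet_completeOn_sup_completeBipartiteOn (hAB : Disjoint A B) (hc : c ∈ B) :
    (completeOn B ⊔ completeBipartiteOn A (B \ {c})).neighborSet c = B \ {c} := by
  have hA : ∀ u ∈ A, u ∉ B := fun _ => (hAB.notMem_of_mem_left ·)
  ext u
  simp only [mem_neighborSet, sup_adj, completeOn_adj, completeBipartiteOn_adj, Set.mem_sdiff,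
    Set.mem_singleton_iff]
  grind

lemma delVert_localComp_completeOn_sup_completeBipartiteOn (hAB : Disjoint A B) (hc : c ∈ B) :
    delVert (localComp (completeOn B ⊔ completeBipartiteOn A (B \ {c})) c) c =
      completeBipartiteOn A (B \ {c}) := by
  have hA : ∀ u ∈ A, u ∉ B := fun _ => (hAB.notMem_of_mem_left ·)
  rw [localComp_eq_symmDiff, neighborSet_completeOn_sup_completeBipartiteOn hAB hc]
  ext a b
  simp only [delVert_adj, symmDiff_def, sup_adj, sdiff_adj, completeOn_adj,
    completeBipartiteOn_adj, Set.mem_sdiff, Set.mem_singleton_iff]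
  grind

end

/-- Extranet, graph level: `(τ_{c2}(τ_{c1}(τ_{c2}(S)) − c1)) − c2` is
the complete bipartite graph on `(P1 \ {c1}, P2 \ {c2})`. -/
theorem stmt_16 {V : Type u} (P1 P2 : Set V) (hdisj : Disjoint P1 P2)
    (c1 c2 : V) (hc1 : c1 ∈ P1) (hc2 : c2 ∈ P2) :
    delVert (localComp (delVert (localComp
        (localComp (binaryStar P1 P2 c1 c2) c2) c1) c1) c2) c2 =
      completeBipartiteOn (P1 \ {c1}) (P2 \ {c2}) := by
  rw [localComp_binaryStar_right hdisj hc1 hc2,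
    delVert_localComp_binaryStar_sup_completeOn hdisj hc1 hc2,
    delVert_localComp_completeOn_sup_completeBipartiteOn (hdisj.mono_left Set.sdiff_subset) hc2]
end
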